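/- arXiv:2305.12614 — 3 statements merged into one kernel-verified Lean document; each statement's English description precedes it below -/
import Mathlib

section
/- Let c, d > 0, w ∈ (0,1], L ∈ (0,1), a_0 > 0, b_0 > 0, and let (x_k)_{k≥1} be a sequence in [0,1] with x_k → L. Define recursively a_k = a_{k−1} + c·w·max(x_k − μ_{k−1}, 0) and b_k = b_{k−1} + d·w·max(μ_{k−1} − x_k, 0), where μ_k = a_k/(a_k + b_k). Then μ_k → L as k → ∞. -/
/-!
The total experience `s k = a k + b k` is nondecreasing, so it either converges or tends to
infinity, and by the symmetry `(a, b, x, μ) ↦ (b, a, 1 - x, 1 - μ)` it suffices to show that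
`μ k < u` eventually, for every `u > L`.

If `s` converges, its increments, which dominate `d w (μ k - x (k+1))⁺`, tend to zero, so
`μ k` is eventually at most `x (k+1)` plus something small. If `s` is unbounded, then once
`s k ≥ c w` an update never overshoots the communicated value, so `μ (k+1) ≤ max (μ k) (x (k+1))`
and the level `u` is never crossed upwards again once `x` stays below it. Nor can `μ` stay above
`u` forever: then only `b` grows, and `μ k = a N / s k → 0`.
-/

open Filter Topology

noncomputable def expectedTrust (a b : ℕ → ℝ) (k : ℕ) : ℝ := a k / (a k + b k)

/-- The update rule with gains `p = c w` and `q = d w`. -/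
structure TrustDynamics (p q : ℝ) (x a b : ℕ → ℝ) : Prop where
  gain_a_pos : 0 < p
  gain_b_pos : 0 < q
  a_zero_pos : 0 < a 0
  b_zero_pos : 0 < b 0
  a_succ : ∀ k, a (k + 1) = a k + p * max (x (k + 1) - expectedTrust a b k) 0
  b_succ : ∀ k, b (k + 1) = b k + q * max (expectedTrust a b k - x (k + 1)) 0

namespace TrustDynamics

variable {p q L u : ℝ} {x a b : ℕ → ℝ}

theorem a_le_succ (h : TrustDynamics p q x a b) (k : ℕ) : a k ≤ a (k + 1) := by
  rw [h.a_succ k]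
  have := mul_nonneg h.gain_a_pos.le (le_max_right (x (k + 1) - expectedTrust a b k) 0)
  linarith

theorem b_le_succ (h : TrustDynamics p q x a b) (k : ℕ) : b k ≤ b (k + 1) := by
  rw [h.b_succ k]
  have := mul_nonneg h.gain_b_pos.le (le_max_right (expectedTrust a b k - x (k + 1)) 0)
  linarith

theorem pos (h : TrustDynamics p q x a b) (k : ℕ) : 0 < a k ∧ 0 < b k := by
  induction k with
  | zero => exact ⟨h.a_zero_pos, h.b_zero_pos⟩
  | succ k ih => exact ⟨ih.1.trans_le (h.a_le_succ k), ih.2.trans_le (h.b_le_succ k)⟩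

theorem monotone_total (h : TrustDynamics p q x a b) : Monotone fun k ↦ a k + b k :=
  monotone_nat_of_le_succ fun k ↦ add_le_add (h.a_le_succ k) (h.b_le_succ k)

theorem expectedTrust_pos (h : TrustDynamics p q x a b) (k : ℕ) : 0 < expectedTrust a b k :=
  div_pos (h.pos k).1 (add_pos (h.pos k).1 (h.pos k).2)

theorem expectedTrust_swap (h : TrustDynamics p q x a b) (k : ℕ) :
    expectedTrust b a k = 1 - expectedTrust a b k := by
  have := add_pos (h.pos k).1 (h.pos k).2
  unfold expectedTrust
  rw [eq_sub_iff_add_eq, add_comm (b k) (a k), ← add_div, add_comm (b k), div_self this.ne']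

theorem swap (h : TrustDynamics p q x a b) : TrustDynamics q p (fun k ↦ 1 - x k) b a where
  gain_a_pos := h.gain_b_pos
  gain_b_pos := h.gain_a_pos
  a_zero_pos := h.b_zero_pos
  b_zero_pos := h.a_zero_pos
  a_succ k := by rw [h.b_succ k, h.expectedTrust_swap, sub_sub_sub_cancel_left]
  b_succ k := by rw [h.a_succ k, h.expectedTrust_swap, sub_sub_sub_cancel_left]

theorem a_succ_eq_of_le (h : TrustDynamics p q x a b) {k : ℕ}
    (hk : x (k + 1) ≤ expectedTrust a b k) : a (k + 1) = a k := by
  rw [h.a_succ k, max_eq_right (by linarith), mul_zero, add_zero]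

theorem b_succ_eq_of_le (h : TrustDynamics p q x a b) {k : ℕ}
    (hk : expectedTrust a b k ≤ x (k + 1)) : b (k + 1) = b k := by
  rw [h.b_succ k, max_eq_right (by linarith), mul_zero, add_zero]

theorem expectedTrust_le_add_increment (h : TrustDynamics p q x a b) (k : ℕ) :
    expectedTrust a b k ≤ x (k + 1) + (a (k + 1) + b (k + 1) - (a k + b k)) / q := by
  have hq := h.gain_b_pos
  have hincr : q * (expectedTrust a b k - x (k + 1)) ≤ a (k + 1) + b (k + 1) - (a k + b k) := by
    have hup := mul_nonneg h.gain_a_pos.le (le_max_right (x (k + 1) - expectedTrust a b k) 0)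
    have hdown := mul_le_mul_of_nonneg_left
      (le_max_left (expectedTrust a b k - x (k + 1)) 0) hq.le
    rw [h.a_succ k, h.b_succ k]
    linarith
  rw [← sub_le_iff_le_add', le_div_iff₀ hq]
  linarith

theorem expectedTrust_succ_le_max (h : TrustDynamics p q x a b) {k : ℕ} (hk : p ≤ a k + b k) :
    expectedTrust a b (k + 1) ≤ max (expectedTrust a b k) (x (k + 1)) := by
  obtain ⟨ha, hb⟩ := h.pos k
  have hs : 0 < a k + b k := add_pos ha hb
  rcases le_total (x (k + 1)) (expectedTrust a b k) with hxμ | hμx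
  · refine le_max_of_le_left ?_
    unfold expectedTrust
    rw [h.a_succ_eq_of_le hxμ]
    exact div_le_div_of_nonneg_left ha.le hs (by linarith [h.b_le_succ k])
  · refine le_max_of_le_right ?_
    have hμ : a k = expectedTrust a b k * (a k + b k) := (div_mul_cancel₀ _ hs.ne').symm
    have hx0 : 0 ≤ x (k + 1) := (h.expectedTrust_pos k).le.trans hμx
    have hgap : p * (1 - x (k + 1)) * (x (k + 1) - expectedTrust a b k)
        ≤ (a k + b k) * (x (k + 1) - expectedTrust a b k) :=
      mul_le_mul_of_nonneg_right (by nlinarith [h.gain_a_pos]) (by linarith)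
    have hnum : 0 < a (k + 1) := (h.pos (k + 1)).1
    unfold expectedTrust
    rw [h.b_succ_eq_of_le hμx, div_le_iff₀ (by linarith), h.a_succ k,
      max_eq_left (by linarith)]
    nlinarith

theorem eventually_expectedTrust_lt_of_tendsto_total {S : ℝ} (h : TrustDynamics p q x a b)
    (hx : Tendsto x atTop (𝓝 L)) (hS : Tendsto (fun k ↦ a k + b k) atTop (𝓝 S)) (hu : L < u) :
    ∀ᶠ k in atTop, expectedTrust a b k < u := by
  have hincr : Tendsto (fun k ↦ a (k + 1) + b (k + 1) - (a k + b k)) atTop (𝓝 0) := by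
    simpa using (hS.comp (tendsto_add_atTop_nat 1)).sub hS
  have hbound : Tendsto (fun k ↦ x (k + 1) + (a (k + 1) + b (k + 1) - (a k + b k)) / q)
      atTop (𝓝 L) := by
    simpa using (hx.comp (tendsto_add_atTop_nat 1)).add (hincr.div_const q)
  filter_upwards [hbound.eventually (gt_mem_nhds hu)] with k hk
  exact (h.expectedTrust_le_add_increment k).trans_lt hk

theorem eventually_expectedTrust_lt_of_tendsto_total_atTop (h : TrustDynamics p q x a b)
    (hx : Tendsto x atTop (𝓝 L)) (hs : Tendsto (fun k ↦ a k + b k) atTop atTop) (hu : L < u)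
    (hu₀ : 0 < u) : ∀ᶠ k in atTop, expectedTrust a b k < u := by
  obtain ⟨N, hN⟩ := eventually_atTop.1 <| (hs.eventually_ge_atTop p).and
    ((hx.comp (tendsto_add_atTop_nat 1)).eventually (gt_mem_nhds hu))
  have hstay : ∀ k, N ≤ k → expectedTrust a b k < u → expectedTrust a b (k + 1) < u :=
    fun k hk hμ ↦ (h.expectedTrust_succ_le_max (hN k hk).1).trans_lt (max_lt hμ (hN k hk).2)
  obtain ⟨k₀, hk₀, hμ₀⟩ : ∃ k ≥ N, expectedTrust a b k < u := by
    by_contra! habove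
    have hconst : ∀ k, N ≤ k → a k = a N := by
      refine Nat.le_induction rfl fun k hk ih ↦ ?_
      rw [h.a_succ_eq_of_le (((hN k hk).2).le.trans (habove k hk)), ih]
    have hzero : Tendsto (fun k ↦ a N / (a k + b k)) atTop (𝓝 0) :=
      tendsto_const_nhds.div_atTop hs
    obtain ⟨k, hk, hsmall⟩ :=
      ((eventually_ge_atTop N).and (hzero.eventually (gt_mem_nhds hu₀))).exists
    rw [← hconst k hk] at hsmall
    exact (habove k hk).not_gt hsmall
  filter_upwards [eventually_ge_atTop k₀] with k hk
  induction k, hk using Nat.le_induction with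
  | base => exact hμ₀
  | succ k hk ih => exact hstay k (hk₀.trans hk) ih

theorem eventually_expectedTrust_lt (h : TrustDynamics p q x a b)
    (hx : Tendsto x atTop (𝓝 L)) (hu : L < u) (hu₀ : 0 < u) :
    ∀ᶠ k in atTop, expectedTrust a b k < u := by
  rcases tendsto_atTop_of_monotone h.monotone_total with hs | ⟨S, hS⟩
  · exact h.eventually_expectedTrust_lt_of_tendsto_total_atTop hx hs hu hu₀
  · exact h.eventually_expectedTrust_lt_of_tendsto_total hx hS hu

theorem tendsto_expectedTrust (h : TrustDynamics p q x a b) (hx : Tendsto x atTop (𝓝 L))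
    (hL : L ∈ Set.Icc (0 : ℝ) 1) : Tendsto (expectedTrust a b) atTop (𝓝 L) := by
  refine tendsto_order.2 ⟨fun l hl ↦ ?_, fun u hu ↦ h.eventually_expectedTrust_lt hx hu ?_⟩
  · have hswap := h.swap.eventually_expectedTrust_lt (tendsto_const_nhds.sub hx)
      (sub_lt_sub_left hl 1) (by linarith [hL.2])
    filter_upwards [hswap] with k hk
    rw [h.expectedTrust_swap] at hk
    linarith
  · linarith [hL.1]

end TrustDynamics

theorem indirect_only_expected_trust_tendsto_general
    (c d w L a0 b0 : ℝ) (hc : 0 < c) (hd : 0 < d) (hw : w ∈ Set.Ioc (0 : ℝ) 1)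
    (hL : L ∈ Set.Ioo (0 : ℝ) 1) (ha0 : 0 < a0) (hb0 : 0 < b0)
    (x : ℕ → ℝ)
    (hx_lim : Tendsto x atTop (nhds L))
    (a b : ℕ → ℝ) (ha_init : a 0 = a0) (hb_init : b 0 = b0)
    (ha : ∀ k, 1 ≤ k →
      a k = a (k - 1) + c * w * max (x k - a (k - 1) / (a (k - 1) + b (k - 1))) 0)
    (hb : ∀ k, 1 ≤ k →
      b k = b (k - 1) + d * w * max (a (k - 1) / (a (k - 1) + b (k - 1)) - x k) 0) :
    Tendsto (fun k => a k / (a k + b k)) atTop (nhds L) :=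
  TrustDynamics.tendsto_expectedTrust
    { gain_a_pos := mul_pos hc hw.1
      gain_b_pos := mul_pos hd hw.1
      a_zero_pos := ha_init ▸ ha0
      b_zero_pos := hb_init ▸ hb0
      a_succ := fun k ↦ ha (k + 1) k.succ_pos
      b_succ := fun k ↦ hb (k + 1) k.succ_pos }
    hx_lim (Set.Ioo_subset_Icc_self hL)

/-- **Indirect-only trust dynamics track the communicated trust.** If communicated trust
values `x k ∈ [0,1]` converge to `L ∈ (0,1)` and the cumulative experiences update by
`a k = a (k−1) + c·w·(x k − μ (k−1))⁺` and `b k = b (k−1) + d·w·(μ (k−1) − x k)⁺`,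
where `μ k = a k/(a k + b k)`, then the expected trust `μ k` converges to `L`. -/
theorem indirect_only_expected_trust_tendsto
    (c d w L a0 b0 : ℝ) (hc : 0 < c) (hd : 0 < d) (hw : w ∈ Set.Ioc (0 : ℝ) 1)
    (hL : L ∈ Set.Ioo (0 : ℝ) 1) (ha0 : 0 < a0) (hb0 : 0 < b0)
    (x : ℕ → ℝ) (hx_mem : ∀ k, 1 ≤ k → x k ∈ Set.Icc (0 : ℝ) 1)
    (hx_lim : Tendsto x atTop (nhds L))
    (a b : ℕ → ℝ) (ha_init : a 0 = a0) (hb_init : b 0 = b0)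
    (ha : ∀ k, 1 ≤ k →
      a k = a (k - 1) + c * w * max (x k - a (k - 1) / (a (k - 1) + b (k - 1))) 0)
    (hb : ∀ k, 1 ≤ k →
      b k = b (k - 1) + d * w * max (a (k - 1) / (a (k - 1) + b (k - 1)) - x k) 0) :
    Tendsto (fun k => a k / (a k + b k)) atTop (nhds L) :=
  indirect_only_expected_trust_tendsto_general c d w L a0 b0 hc hd hw hL ha0 hb0 x hx_lim a b
    ha_init hb_init ha hb
end

section
/- Let S^x, F^x, F̂^x, Ŝ^y, S^y, F^y be strictly positive real constants with S^x·F^y ≥ F^x·S^y. Then there exists exactly one pair (u, v) ∈ (0,1) × (0,1) with u ≥ v satisfying the system S^x·(1−u)/u = F̂^x·(u−v) + F^x and F^y·v/(1−v) = Ŝ^y·(u−v) + S^y. -/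
/-!
Write `w = u - v` for the trust gap. For a fixed gap each equation is solved by a single value,
`u = Sˣ / (Sˣ + F̂ˣ w + Fˣ)` and `v = 1 - Fʸ / (Fʸ + Ŝʸ w + Sʸ)`, so equilibria correspond to the
zeros `w ≥ 0` of `w ↦ u(w) - v(w) - w`. This function is strictly decreasing, nonnegative at `0`
exactly when `Sˣ Fʸ ≥ Fˣ Sʸ`, and negative at `1`, hence it has exactly one zero.
-/

open Set

section OddsRatio

variable {K : Type*} [Field K] {c t x : K}

theorem mul_one_sub_div_eq_iff (hx : x ≠ 0) (hct : c + t ≠ 0) :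
    c * ((1 - x) / x) = t ↔ x = c / (c + t) := by
  rw [eq_div_iff hct, mul_div_assoc', div_eq_iff hx]
  constructor <;> intro h <;> linear_combination -h

theorem div_add_mem_Ioo [LinearOrder K] [IsStrictOrderedRing K] (hc : 0 < c) (ht : 0 < t) :
    c / (c + t) ∈ Ioo 0 1 :=
  ⟨by positivity, (div_lt_one (by positivity)).2 (lt_add_of_pos_right c ht)⟩

end OddsRatio

namespace TIP

variable (Sx Fx Fxh Syh Sy Fy : ℝ)

noncomputable def trustX (w : ℝ) : ℝ := Sx / (Sx + (Fxh * w + Fx))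

noncomputable def trustY (w : ℝ) : ℝ := 1 - Fy / (Fy + (Syh * w + Sy))

noncomputable def trustGap (w : ℝ) : ℝ := trustX Sx Fx Fxh w - trustY Syh Sy Fy w - w

variable {Sx Fx Fxh Syh Sy Fy}

theorem mul_one_sub_div_eq_iff_eq_trustX {u w : ℝ} (hu : u ≠ 0)
    (hw : Sx + (Fxh * w + Fx) ≠ 0) :
    Sx * ((1 - u) / u) = Fxh * w + Fx ↔ u = trustX Sx Fx Fxh w :=
  mul_one_sub_div_eq_iff hu hw

theorem mul_div_one_sub_eq_iff_eq_trustY {v w : ℝ} (hv : v ≠ 1)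
    (hw : Fy + (Syh * w + Sy) ≠ 0) :
    Fy * (v / (1 - v)) = Syh * w + Sy ↔ v = trustY Syh Sy Fy w := by
  have h := mul_one_sub_div_eq_iff (sub_ne_zero.2 hv.symm) hw
  rw [sub_sub_cancel] at h
  rw [h, trustY]
  constructor <;> intro h <;> linarith

theorem trustX_mem_Ioo (hSx : 0 < Sx) (hFx : 0 < Fx) (hFxh : 0 ≤ Fxh) {w : ℝ} (hw : 0 ≤ w) :
    trustX Sx Fx Fxh w ∈ Ioo 0 1 :=
  div_add_mem_Ioo hSx (by positivity)

theorem trustY_mem_Ioo (hSyh : 0 ≤ Syh) (hSy : 0 < Sy) (hFy : 0 < Fy) {w : ℝ} (hw : 0 ≤ w) :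
    trustY Syh Sy Fy w ∈ Ioo 0 1 := by
  obtain ⟨h0, h1⟩ := div_add_mem_Ioo hFy (show 0 < Syh * w + Sy by positivity)
  exact ⟨sub_pos.2 h1, sub_lt_self 1 h0⟩

theorem antitoneOn_trustX (hSx : 0 < Sx) (hFx : 0 ≤ Fx) (hFxh : 0 ≤ Fxh) :
    AntitoneOn (trustX Sx Fx Fxh) (Ici 0) := by
  intro a ha b _ hab
  rw [mem_Ici] at ha
  unfold trustX
  gcongr

theorem monotoneOn_trustY (hSyh : 0 ≤ Syh) (hSy : 0 ≤ Sy) (hFy : 0 < Fy) :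
    MonotoneOn (trustY Syh Sy Fy) (Ici 0) := by
  intro a ha b _ hab
  rw [mem_Ici] at ha
  unfold trustY
  gcongr

theorem strictAntiOn_trustGap (hSx : 0 < Sx) (hFx : 0 ≤ Fx) (hFxh : 0 ≤ Fxh)
    (hSyh : 0 ≤ Syh) (hSy : 0 ≤ Sy) (hFy : 0 < Fy) :
    StrictAntiOn (trustGap Sx Fx Fxh Syh Sy Fy) (Ici 0) := by
  intro a ha b hb hab
  have hX := antitoneOn_trustX hSx hFx hFxh ha hb hab.le
  have hY := monotoneOn_trustY hSyh hSy hFy ha hb hab.le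
  unfold trustGap
  linarith

theorem continuousOn_trustGap (hSx : 0 < Sx) (hFx : 0 ≤ Fx) (hFxh : 0 ≤ Fxh)
    (hSyh : 0 ≤ Syh) (hSy : 0 ≤ Sy) (hFy : 0 < Fy) :
    ContinuousOn (trustGap Sx Fx Fxh Syh Sy Fy) (Ici 0) := by
  unfold trustGap trustX trustY
  refine ContinuousOn.sub (ContinuousOn.sub ?_ (continuousOn_const.sub ?_)) continuousOn_id
  · exact continuousOn_const.div (by fun_prop) fun w (hw : 0 ≤ w) => by positivity
  · exact continuousOn_const.div (by fun_prop) fun w (hw : 0 ≤ w) => by positivity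

theorem trustGap_zero_nonneg (hSx : 0 < Sx) (hFx : 0 < Fx) (hSy : 0 < Sy) (hFy : 0 < Fy)
    (hcase : Fx * Sy ≤ Sx * Fy) :
    0 ≤ trustGap Sx Fx Fxh Syh Sy Fy 0 := by
  simp only [trustGap, trustX, trustY, mul_zero, zero_add, sub_zero]
  rw [one_sub_div (by positivity), add_sub_cancel_left, sub_nonneg,
    div_le_div_iff₀ (by positivity) (by positivity)]
  nlinarith

theorem trustGap_one_neg (hSx : 0 < Sx) (hFx : 0 < Fx) (hFxh : 0 ≤ Fxh)
    (hSyh : 0 ≤ Syh) (hSy : 0 < Sy) (hFy : 0 < Fy) :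
    trustGap Sx Fx Fxh Syh Sy Fy 1 < 0 := by
  have hX := (trustX_mem_Ioo hSx hFx hFxh zero_le_one).2
  have hY := (trustY_mem_Ioo hSyh hSy hFy zero_le_one).1
  unfold trustGap
  linarith

end TIP

open TIP in
/-- **Existence and uniqueness of the TIP equilibrium (case `Sˣ·Fʸ ≥ Fˣ·Sʸ`).**
There is exactly one pair `(u, v) ∈ (0,1) × (0,1)` with `u ≥ v` satisfying the system
`Sˣ·(1−u)/u = F̂ˣ·(u−v) + Fˣ` and `Fʸ·v/(1−v) = Ŝʸ·(u−v) + Sʸ`. -/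
theorem tip_equilibrium_exists_unique
    (Sx Fx Fxh Syh Sy Fy : ℝ)
    (hSx : 0 < Sx) (hFx : 0 < Fx) (hFxh : 0 < Fxh) (hSyh : 0 < Syh)
    (hSy : 0 < Sy) (hFy : 0 < Fy)
    (hcase : Sx * Fy ≥ Fx * Sy) :
    ∃! p : ℝ × ℝ,
      p.1 ∈ Set.Ioo (0 : ℝ) 1 ∧ p.2 ∈ Set.Ioo (0 : ℝ) 1 ∧ p.2 ≤ p.1 ∧
      Sx * ((1 - p.1) / p.1) = Fxh * (p.1 - p.2) + Fx ∧
      Fy * (p.2 / (1 - p.2)) = Syh * (p.1 - p.2) + Sy := by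
  set g := trustGap Sx Fx Fxh Syh Sy Fy
  have hanti := strictAntiOn_trustGap hSx hFx.le hFxh.le hSyh.le hSy.le hFy
  obtain ⟨w, ⟨hw, -⟩, hgw⟩ : ∃ w ∈ Icc (0 : ℝ) 1, g w = 0 :=
    intermediate_value_Icc' zero_le_one
      ((continuousOn_trustGap hSx hFx.le hFxh.le hSyh.le hSy.le hFy).mono Icc_subset_Ici_self)
      ⟨(trustGap_one_neg hSx hFx hFxh.le hSyh.le hSy hFy).le,
        trustGap_zero_nonneg hSx hFx hSy hFy hcase⟩
  have hgap : trustX Sx Fx Fxh w - trustY Syh Sy Fy w = w := by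
    unfold g trustGap at hgw; linarith
  refine ⟨(trustX Sx Fx Fxh w, trustY Syh Sy Fy w),
    ⟨trustX_mem_Ioo hSx hFx hFxh.le hw, trustY_mem_Ioo hSyh.le hSy hFy hw, by linarith, ?_, ?_⟩, ?_⟩
  · rw [hgap, mul_one_sub_div_eq_iff_eq_trustX (trustX_mem_Ioo hSx hFx hFxh.le hw).1.ne'
      (by positivity)]
  · rw [hgap, mul_div_one_sub_eq_iff_eq_trustY (trustY_mem_Ioo hSyh.le hSy hFy hw).2.ne
      (by positivity)]
  · rintro ⟨u, v⟩ ⟨hu, hv, hvu, hx, hy⟩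
    dsimp only at hu hv hvu hx hy
    have hw' : 0 ≤ u - v := sub_nonneg.2 hvu
    rw [mul_one_sub_div_eq_iff_eq_trustX hu.1.ne' (by positivity)] at hx
    rw [mul_div_one_sub_eq_iff_eq_trustY hv.2.ne (by positivity)] at hy
    have hroot : g (u - v) = 0 := by
      change trustX Sx Fx Fxh (u - v) - trustY Syh Sy Fy (u - v) - (u - v) = 0
      rw [← hx, ← hy, sub_self]
    have huvw : u - v = w := hanti.injOn hw' hw (hroot.trans hgw.symm)
    rw [huvw] at hx hy
    rw [hx, hy]
end

section
/- The function (α, β) ↦ log Γ(α) + log Γ(β) − log Γ(α+β) (the logarithm of the Beta function B(α,β)) is convex on the set {(α,β) ∈ ℝ² : α > 0, β > 0}. Equivalently, for every fixed t ∈ (0,1), the log-density (α, β) ↦ (α−1)·log t + (β−1)·log(1−t) − log B(α,β) of the Beta(α,β) distribution at t is a concave function of (α,β) on {α > 0, β > 0}. -/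
/-!
For fixed `x ∈ (0,1)` the integrand `x ^ (a - 1) * (1 - x) ^ (b - 1)` of
`B(a,b) = ∫₀¹ x ^ (a - 1) * (1 - x) ^ (b - 1) dx` is log-affine in `(a, b)`, so Hölder's inequality
with exponents `1/θ` and `1/(1-θ)` gives `B(θ p + (1-θ) q) ≤ B(p) ^ θ * B(q) ^ (1-θ)`, i.e. `log B`
is convex. The log-density of Beta(a,b) at `t` is an affine function of `(a, b)` minus `log B`.
-/

open MeasureTheory Set Real

namespace MeasureTheory

variable {α : Type*} [MeasurableSpace α] {μ : Measure α}

theorem Integrable.memLp_rpow_of_nonneg {f : α → ℝ} (hfi : Integrable f μ) (hf : 0 ≤ᵐ[μ] f)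
    {a : ℝ} (ha : 0 < a) : MemLp (fun x ↦ f x ^ a) (ENNReal.ofReal (1 / a)) μ := by
  have h := (memLp_one_iff_integrable.2 hfi).norm_rpow_div (ENNReal.ofReal a)
  rw [ENNReal.toReal_ofReal ha.le, ← ENNReal.ofReal_one, ← ENNReal.ofReal_div_of_pos ha] at h
  refine h.ae_eq ?_
  filter_upwards [hf] with x hx
  rw [norm_of_nonneg hx]

theorem integral_rpow_mul_rpow_le {f g : α → ℝ} (hf : 0 ≤ᵐ[μ] f) (hg : 0 ≤ᵐ[μ] g)
    (hfi : Integrable f μ) (hgi : Integrable g μ) {a b : ℝ} (ha : 0 < a) (hb : 0 < b)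
    (hab : a + b = 1) :
    ∫ x, f x ^ a * g x ^ b ∂μ ≤ (∫ x, f x ∂μ) ^ a * (∫ x, g x ∂μ) ^ b := by
  have integral_rpow_rpow_inv : ∀ {h : α → ℝ} {c : ℝ}, 0 ≤ᵐ[μ] h → 0 < c →
      ∫ x, (h x ^ c) ^ (1 / c) ∂μ = ∫ x, h x ∂μ := fun {h c} hh hc ↦ by
    refine integral_congr_ae ?_
    filter_upwards [hh] with x hx
    rw [← rpow_mul hx, mul_one_div_cancel hc.ne', rpow_one]
  have holder := integral_mul_le_Lp_mul_Lq_of_nonneg (holderConjugate_one_div ha hb hab)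
    (hf.mono fun x hx ↦ rpow_nonneg hx a) (hg.mono fun x hx ↦ rpow_nonneg hx b)
    (hfi.memLp_rpow_of_nonneg hf ha) (hgi.memLp_rpow_of_nonneg hg hb)
  rwa [integral_rpow_rpow_inv hf ha, integral_rpow_rpow_inv hg hb, one_div_one_div,
    one_div_one_div] at holder

end MeasureTheory

lemma Real.rpow_mul_one_sub_rpow_mul_add_mul {x : ℝ} (hx : x ∈ Ioo 0 1)
    {s₁ t₁ s₂ t₂ θ₁ θ₂ : ℝ} (hθ : θ₁ + θ₂ = 1) :
    x ^ (θ₁ * s₁ + θ₂ * s₂ - 1) * (1 - x) ^ (θ₁ * t₁ + θ₂ * t₂ - 1) =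
      (x ^ (s₁ - 1) * (1 - x) ^ (t₁ - 1)) ^ θ₁ * (x ^ (s₂ - 1) * (1 - x) ^ (t₂ - 1)) ^ θ₂ := by
  have hx₀ := hx.1
  have hx₁ : 0 < 1 - x := sub_pos.2 hx.2
  rw [mul_rpow (by positivity) (by positivity), mul_rpow (by positivity) (by positivity),
    ← rpow_mul hx₀.le, ← rpow_mul hx₀.le, ← rpow_mul hx₁.le, ← rpow_mul hx₁.le]
  calc _ = x ^ ((s₁ - 1) * θ₁ + (s₂ - 1) * θ₂) * (1 - x) ^ ((t₁ - 1) * θ₁ + (t₂ - 1) * θ₂) := by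
        congr 2 <;> linear_combination hθ
    _ = _ := by rw [rpow_add hx₀, rpow_add hx₁]; ring

namespace Complex

lemma ofReal_rpow_mul_one_sub_rpow {x : ℝ} (hx : x ∈ Icc 0 1) (a b : ℝ) :
    ((x ^ (a - 1) * (1 - x) ^ (b - 1) : ℝ) : ℂ) =
      (x : ℂ) ^ ((a : ℂ) - 1) * (1 - (x : ℂ)) ^ ((b : ℂ) - 1) := by
  rw [ofReal_mul, ofReal_cpow hx.1, ofReal_cpow (sub_nonneg.2 hx.2)]
  push_cast
  ring

lemma betaIntegral_ofReal (a b : ℝ) :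
    betaIntegral a b = ((∫ x in (0 : ℝ)..1, x ^ (a - 1) * (1 - x) ^ (b - 1) : ℝ) : ℂ) := by
  rw [betaIntegral, ← intervalIntegral.integral_ofReal]
  refine intervalIntegral.integral_congr fun x hx ↦ ?_
  rw [uIcc_of_le zero_le_one] at hx
  exact (ofReal_rpow_mul_one_sub_rpow hx a b).symm

end Complex

namespace ProbabilityTheory

variable {a b : ℝ}

lemma integrableOn_rpow_mul_one_sub_rpow (ha : 0 < a) (hb : 0 < b) :
    IntegrableOn (fun x : ℝ ↦ x ^ (a - 1) * (1 - x) ^ (b - 1)) (Ioo 0 1) := by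
  have h := Complex.betaIntegral_convergent (u := a) (v := b) (by simpa) (by simpa)
  rw [intervalIntegrable_iff_integrableOn_Ioc_of_le zero_le_one] at h
  refine IntegrableOn.congr_fun (h.mono_set Ioo_subset_Ioc_self).re (fun x hx ↦ ?_)
    measurableSet_Ioo
  rw [← Complex.ofReal_rpow_mul_one_sub_rpow (Ioo_subset_Icc_self hx)]
  exact Complex.ofReal_re _

lemma integral_rpow_mul_one_sub_rpow (ha : 0 < a) (hb : 0 < b) :
    ∫ x in Ioo 0 1, x ^ (a - 1) * (1 - x) ^ (b - 1) = beta a b := by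
  rw [beta_eq_betaIntegralReal a b ha hb, Complex.betaIntegral_ofReal, Complex.ofReal_re,
    intervalIntegral.integral_of_le zero_le_one, integral_Ioc_eq_integral_Ioo]

lemma log_beta (ha : 0 < a) (hb : 0 < b) :
    log (beta a b) = log (Gamma a) + log (Gamma b) - log (Gamma (a + b)) := by
  have hΓa := Gamma_pos_of_pos ha
  have hΓb := Gamma_pos_of_pos hb
  rw [beta, log_div (by positivity) (Gamma_pos_of_pos (add_pos ha hb)).ne',
    log_mul hΓa.ne' hΓb.ne']

theorem beta_mul_add_mul_le_rpow_beta_mul_rpow_beta {s₁ t₁ s₂ t₂ θ₁ θ₂ : ℝ} (hs₁ : 0 < s₁)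
    (ht₁ : 0 < t₁) (hs₂ : 0 < s₂) (ht₂ : 0 < t₂) (hθ₁ : 0 < θ₁) (hθ₂ : 0 < θ₂)
    (hθ : θ₁ + θ₂ = 1) :
    beta (θ₁ * s₁ + θ₂ * s₂) (θ₁ * t₁ + θ₂ * t₂) ≤ beta s₁ t₁ ^ θ₁ * beta s₂ t₂ ^ θ₂ := by
  have integrand_nonneg : ∀ s t : ℝ,
      0 ≤ᵐ[volume.restrict (Ioo 0 1)] fun x : ℝ ↦ x ^ (s - 1) * (1 - x) ^ (t - 1) :=
    fun s t ↦ ae_restrict_of_forall_mem measurableSet_Ioo fun x hx ↦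
      mul_nonneg (rpow_nonneg hx.1.le _) (rpow_nonneg (sub_nonneg.2 hx.2.le) _)
  rw [← integral_rpow_mul_one_sub_rpow hs₁ ht₁, ← integral_rpow_mul_one_sub_rpow hs₂ ht₂,
    ← integral_rpow_mul_one_sub_rpow (by positivity) (by positivity),
    setIntegral_congr_fun measurableSet_Ioo fun x hx ↦ rpow_mul_one_sub_rpow_mul_add_mul hx hθ]
  exact integral_rpow_mul_rpow_le (integrand_nonneg s₁ t₁) (integrand_nonneg s₂ t₂)
    (integrableOn_rpow_mul_one_sub_rpow hs₁ ht₁) (integrableOn_rpow_mul_one_sub_rpow hs₂ ht₂)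
    hθ₁ hθ₂ hθ

theorem convexOn_log_beta : ConvexOn ℝ (Ioi 0 ×ˢ Ioi 0) fun p : ℝ × ℝ ↦ log (beta p.1 p.2) := by
  refine convexOn_iff_forall_pos.2 ⟨(convex_Ioi 0).prod (convex_Ioi 0),
    fun p ⟨hp₁, hp₂⟩ q ⟨hq₁, hq₂⟩ θ₁ θ₂ hθ₁ hθ₂ hθ ↦ ?_⟩
  have hβp := beta_pos hp₁ hp₂
  have hβq := beta_pos hq₁ hq₂
  simp only [Prod.fst_add, Prod.snd_add, Prod.smul_fst, Prod.smul_snd, smul_eq_mul]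
  rw [← log_rpow hβp, ← log_rpow hβq, ← log_mul (by positivity) (by positivity)]
  gcongr
  · exact beta_pos (add_pos (mul_pos hθ₁ hp₁) (mul_pos hθ₂ hq₁))
      (add_pos (mul_pos hθ₁ hp₂) (mul_pos hθ₂ hq₂))
  · exact beta_mul_add_mul_le_rpow_beta_mul_rpow_beta hp₁ hp₂ hq₁ hq₂ hθ₁ hθ₂ hθ

end ProbabilityTheory

open ProbabilityTheory in
/-- **Log-convexity of the Beta function / log-concavity of the Beta density in its
parameters.** The function `(α, β) ↦ log B(α,β) = log Γ(α) + log Γ(β) − log Γ(α+β)` is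
convex on the open positive quadrant; equivalently, for every fixed `t ∈ (0,1)` the
log-density `(α, β) ↦ (α−1)·log t + (β−1)·log(1−t) − log B(α,β)` of the Beta(α,β)
distribution at `t` is concave there. -/
theorem logBetaFunction_convexOn_and_logBetaDensity_concaveOn :
    ConvexOn ℝ {p : ℝ × ℝ | 0 < p.1 ∧ 0 < p.2}
      (fun p : ℝ × ℝ =>
        Real.log (Real.Gamma p.1) + Real.log (Real.Gamma p.2)
          - Real.log (Real.Gamma (p.1 + p.2))) ∧
    ∀ t : ℝ, t ∈ Set.Ioo (0 : ℝ) 1 →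
      ConcaveOn ℝ {p : ℝ × ℝ | 0 < p.1 ∧ 0 < p.2}
        (fun p : ℝ × ℝ =>
          (p.1 - 1) * Real.log t + (p.2 - 1) * Real.log (1 - t)
            - (Real.log (Real.Gamma p.1) + Real.log (Real.Gamma p.2)
                - Real.log (Real.Gamma (p.1 + p.2)))) := by
  have hconvex : ConvexOn ℝ {p : ℝ × ℝ | 0 < p.1 ∧ 0 < p.2} fun p : ℝ × ℝ ↦
      log (Gamma p.1) + log (Gamma p.2) - log (Gamma (p.1 + p.2)) :=
    convexOn_log_beta.congr fun p hp ↦ log_beta hp.1 hp.2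
  refine ⟨hconvex, fun t _ ↦ ?_⟩
  have hS := hconvex.1
  have haffine : ConcaveOn ℝ {p : ℝ × ℝ | 0 < p.1 ∧ 0 < p.2} fun p : ℝ × ℝ ↦
      (p.1 - 1) * log t + (p.2 - 1) * log (1 - t) :=
    (((LinearMap.fst ℝ ℝ ℝ).smulRight (log t) + (LinearMap.snd ℝ ℝ ℝ).smulRight (log (1 - t))
      ).concaveOn hS).sub (convexOn_const (log t + log (1 - t)) hS) |>.congr fun p _ ↦ by
        simp only [Pi.sub_apply, LinearMap.add_apply, LinearMap.smulRight_apply,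
          LinearMap.fst_apply, LinearMap.snd_apply, smul_eq_mul]
        ring
  exact haffine.sub hconvex
end
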